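/- arXiv:1311.4044 — 6 statements merged into one kernel-verified Lean document; each statement's English description precedes it below -/
import Mathlib

section
/- Let G, H, K be finite groups acting on finite sets X, Y, Z, and let (α,θ_α): X/G → Z/K and (β,θ_β): Y/H → Z/K be 1-cells. Set F = {(x,y,k) ∈ X×Y×K | β(y) = k•α(x)}. Then the formula (g,h)•(x,y,k) := (g•x, h•y, θ_{β,y}(h)·k·θ_{α,x}(g)⁻¹) defines an action of the group G×H on F (the formula maps F into F, the identity of G×H acts trivially, and the action is compatible with multiplication in G×H). Moreover the projections ℘_X(x,y,k) = x with constant acting family (g,h) ↦ g, and ℘_Y(x,y,k) = y with constant acting family (g,h) ↦ h, are 1-cells F/(G×H) → X/G and F/(G×H) → Y/H respectively, and the map κ(x,y,k) = k satisfies β(℘_Y(f)) = κ(f)•α(℘_X(f)) and κ((g,h)•f)·θ_{α,℘_X(f)}(g)·κ(f)⁻¹ = θ_{β,℘_Y(f)}(h) for all f ∈ F and (g,h) ∈ G×H. -/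
/-!
The cocycle identities for `θ_α` and `θ_β` make the twisted conjugation
`k ↦ θ_β(y)(h) · k · θ_α(x)(g)⁻¹` compatible with multiplication in `G × H` (and force
`θ(1) = 1`), while the equivariance of `α` and `β` shows that it preserves the condition
`β(y) = k • α(x)` cutting out `F`. The remaining claims hold by construction.
-/

section OneCell

variable {G H K X Y Z : Type*} [Group G] [Group H] [Group K]
  [MulAction G X] [MulAction H Y] [MulAction K Z]

theorem cocycle_apply_one {θ : X → G → K}
    (hθ : ∀ (x : X) (g g' : G), θ x (g * g') = θ (g' • x) g * θ x g') (x : X) :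
    θ x 1 = 1 := by
  simpa using hθ x 1 1

theorem twistedConj_one {θα : X → G → K} {θβ : Y → H → K}
    (hα : ∀ (x : X) (g g' : G), θα x (g * g') = θα (g' • x) g * θα x g')
    (hβ : ∀ (y : Y) (h h' : H), θβ y (h * h') = θβ (h' • y) h * θβ y h')
    (x : X) (y : Y) (k : K) :
    θβ y 1 * k * (θα x 1)⁻¹ = k := by
  rw [cocycle_apply_one hα, cocycle_apply_one hβ, inv_one, mul_one, one_mul]

theorem twistedConj_mul {θα : X → G → K} {θβ : Y → H → K}
    (hα : ∀ (x : X) (g g' : G), θα x (g * g') = θα (g' • x) g * θα x g')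
    (hβ : ∀ (y : Y) (h h' : H), θβ y (h * h') = θβ (h' • y) h * θβ y h')
    (g g' : G) (h h' : H) (x : X) (y : Y) (k : K) :
    θβ y (h * h') * k * (θα x (g * g'))⁻¹
      = θβ (h' • y) h * (θβ y h' * k * (θα x g')⁻¹) * (θα (g' • x) g)⁻¹ := by
  rw [hα, hβ]
  group

theorem smul_twistedConj_mem_fiber {α : X → Z} {θα : X → G → K} {β : Y → Z} {θβ : Y → H → K}
    (hα : ∀ (x : X) (g : G), α (g • x) = θα x g • α x)
    (hβ : ∀ (y : Y) (h : H), β (h • y) = θβ y h • β y)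
    (g : G) (h : H) {x : X} {y : Y} {k : K} (hf : β y = k • α x) :
    β (h • y) = (θβ y h * k * (θα x g)⁻¹) • α (g • x) := by
  rw [hβ, hα, hf, smul_smul, smul_smul, inv_mul_cancel_right]

end OneCell

theorem two_fibered_product_construction_general
    (G H K : Type*) [Group G] [Group H] [Group K]
    (X Y Z : Type*)
    [MulAction G X] [MulAction H Y] [MulAction K Z]
    (α : X → Z) (θα : X → G → K)
    (hα1 : ∀ (x : X) (g : G), α (g • x) = θα x g • α x)
    (hα2 : ∀ (x : X) (g g' : G), θα x (g * g') = θα (g' • x) g * θα x g')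
    (β : Y → Z) (θβ : Y → H → K)
    (hβ1 : ∀ (y : Y) (h : H), β (h • y) = θβ y h • β y)
    (hβ2 : ∀ (y : Y) (h h' : H), θβ y (h * h') = θβ (h' • y) h * θβ y h') :
    -- the formula maps F into F
    (∀ (g : G) (h : H) (x : X) (y : Y) (k : K), β y = k • α x →
      β (h • y) = (θβ y h * k * (θα x g)⁻¹) • α (g • x)) ∧
    -- the identity of G×H acts trivially
    (∀ (x : X) (y : Y) (k : K), β y = k • α x →
      (((1 : G) • x, (1 : H) • y, θβ y 1 * k * (θα x 1)⁻¹) : X × Y × K)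
        = (x, y, k)) ∧
    -- compatibility with multiplication in G×H
    (∀ (g g' : G) (h h' : H) (x : X) (y : Y) (k : K), β y = k • α x →
      ((((g * g') • x, (h * h') • y,
          θβ y (h * h') * k * (θα x (g * g'))⁻¹) : X × Y × K)
        = (g • (g' • x), h • (h' • y),
            θβ (h' • y) h * (θβ y h' * k * (θα x g')⁻¹) * (θα (g' • x) g)⁻¹))) ∧
    -- ℘_X is a 1-cell for the constant acting family (g,h) ↦ g
    (∀ (g : G) (h : H) (x : X) (y : Y) (k : K), β y = k • α x →
      ((g • x, h • y, θβ y h * k * (θα x g)⁻¹) : X × Y × K).1 = g • x) ∧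
    -- ℘_Y is a 1-cell for the constant acting family (g,h) ↦ h
    (∀ (g : G) (h : H) (x : X) (y : Y) (k : K), β y = k • α x →
      ((g • x, h • y, θβ y h * k * (θα x g)⁻¹) : X × Y × K).2.1 = h • y) ∧
    -- κ is a 2-cell: β(℘_Y f) = κ(f) • α(℘_X f)
    (∀ (x : X) (y : Y) (k : K), β y = k • α x → β y = k • α x) ∧
    -- κ((g,h)•f) · θ_α(℘_X f)(g) · κ(f)⁻¹ = θ_β(℘_Y f)(h)
    (∀ (g : G) (h : H) (x : X) (y : Y) (k : K), β y = k • α x →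
      (θβ y h * k * (θα x g)⁻¹) * θα x g * k⁻¹ = θβ y h) := by
  refine ⟨fun g h _ _ _ hf => smul_twistedConj_mem_fiber hα1 hβ1 g h hf, ?_, ?_,
    fun _ _ _ _ _ _ => rfl, fun _ _ _ _ _ _ => rfl, fun _ _ _ hf => hf, ?_⟩
  · intro x y k _
    rw [one_smul, one_smul, twistedConj_one hα2 hβ2]
  · intro g g' h h' x y k _
    rw [mul_smul, mul_smul, twistedConj_mul hα2 hβ2]
  · intro g h x y k _
    group

/-- The construction of the 2-fibered product in 𝕊: the set
F = {(x,y,k) | β(y) = k•α(x)} carries a G×H-action via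
(g,h)•(x,y,k) = (g•x, h•y, θ_β(y)(h)·k·θ_α(x)(g)⁻¹), the projections to X and Y
are 1-cells (with constant acting families), and κ(x,y,k) = k gives a 2-cell. -/
theorem two_fibered_product_construction
    (G H K : Type*) [Group G] [Group H] [Group K] [Finite G] [Finite H] [Finite K]
    (X Y Z : Type*) [Finite X] [Finite Y] [Finite Z]
    [MulAction G X] [MulAction H Y] [MulAction K Z]
    (α : X → Z) (θα : X → G → K)
    (hα1 : ∀ (x : X) (g : G), α (g • x) = θα x g • α x)
    (hα2 : ∀ (x : X) (g g' : G), θα x (g * g') = θα (g' • x) g * θα x g')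
    (β : Y → Z) (θβ : Y → H → K)
    (hβ1 : ∀ (y : Y) (h : H), β (h • y) = θβ y h • β y)
    (hβ2 : ∀ (y : Y) (h h' : H), θβ y (h * h') = θβ (h' • y) h * θβ y h') :
    -- the formula maps F into F
    (∀ (g : G) (h : H) (x : X) (y : Y) (k : K), β y = k • α x →
      β (h • y) = (θβ y h * k * (θα x g)⁻¹) • α (g • x)) ∧
    -- the identity of G×H acts trivially
    (∀ (x : X) (y : Y) (k : K), β y = k • α x →
      (((1 : G) • x, (1 : H) • y, θβ y 1 * k * (θα x 1)⁻¹) : X × Y × K)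
        = (x, y, k)) ∧
    -- compatibility with multiplication in G×H
    (∀ (g g' : G) (h h' : H) (x : X) (y : Y) (k : K), β y = k • α x →
      ((((g * g') • x, (h * h') • y,
          θβ y (h * h') * k * (θα x (g * g'))⁻¹) : X × Y × K)
        = (g • (g' • x), h • (h' • y),
            θβ (h' • y) h * (θβ y h' * k * (θα x g')⁻¹) * (θα (g' • x) g)⁻¹))) ∧
    -- ℘_X is a 1-cell for the constant acting family (g,h) ↦ g
    (∀ (g : G) (h : H) (x : X) (y : Y) (k : K), β y = k • α x →
      ((g • x, h • y, θβ y h * k * (θα x g)⁻¹) : X × Y × K).1 = g • x) ∧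
    -- ℘_Y is a 1-cell for the constant acting family (g,h) ↦ h
    (∀ (g : G) (h : H) (x : X) (y : Y) (k : K), β y = k • α x →
      ((g • x, h • y, θβ y h * k * (θα x g)⁻¹) : X × Y × K).2.1 = h • y) ∧
    -- κ is a 2-cell: β(℘_Y f) = κ(f) • α(℘_X f)
    (∀ (x : X) (y : Y) (k : K), β y = k • α x → β y = k • α x) ∧
    -- κ((g,h)•f) · θ_α(℘_X f)(g) · κ(f)⁻¹ = θ_β(℘_Y f)(h)
    (∀ (g : G) (h : H) (x : X) (y : Y) (k : K), β y = k • α x →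
      (θβ y h * k * (θα x g)⁻¹) * θα x g * k⁻¹ = θβ y h) :=
  two_fibered_product_construction_general G H K X Y Z α θα hα1 hα2 β θβ hβ1 hβ2
end

section
/- Let (α,θ_α): X/G → Y/H and (β,θ_β): Y/H → X/G be 1-cells, and let ρ: X → G and λ: Y → H be maps such that: x = ρ_x•β(α(x)) and ρ_{g•x}·θ_{β,α(x)}(θ_{α,x}(g))·ρ_x⁻¹ = g for all x ∈ X and g ∈ G; y = λ_y•α(β(y)) and λ_{h•y}·θ_{α,β(y)}(θ_{β,y}(h))·λ_y⁻¹ = h for all y ∈ Y and h ∈ H; and the triangle identities θ_{α,β(α(x))}(ρ_x) = λ_{α(x)} for all x ∈ X and ρ_{β(y)} = θ_{β,α(β(y))}(λ_y) for all y ∈ Y hold. Then for any h ∈ H and x ∈ X, setting g = θ_{β,α(x)}(h)·ρ_x⁻¹, one has (1) θ_{α,x}(g) = λ_{h•α(x)}⁻¹·h, and (2) θ_{α,g•x}(g⁻¹) = h⁻¹·λ_{h•α(x)}. -/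
/-- Condition (ii) on the family `θ` of a 1-cell `X/G → Y/H`. -/
def IsActionCocycle {G H X : Type*} [Group G] [Mul H] [MulAction G X] (θ : X → G → H) : Prop :=
  ∀ (x : X) (g g' : G), θ x (g * g') = θ (g' • x) g * θ x g'

namespace IsActionCocycle

variable {G H X : Type*} [Group G] [Group H] [MulAction G X] {θ : X → G → H}

theorem map_one (hθ : IsActionCocycle θ) (x : X) : θ x 1 = 1 := by
  simpa using hθ x 1 1

theorem map_inv (hθ : IsActionCocycle θ) (x : X) (g : G) : θ (g • x) g⁻¹ = (θ x g)⁻¹ :=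
  eq_inv_of_mul_eq_one_left <| by rw [← hθ, inv_mul_cancel, hθ.map_one]

theorem map_inv' (hθ : IsActionCocycle θ) (x : X) (g : G) : θ x g⁻¹ = (θ (g⁻¹ • x) g)⁻¹ := by
  simpa using hθ.map_inv (g⁻¹ • x) g

end IsActionCocycle

theorem adjoint_equivalence_theta_lemma_general
    (G H : Type*) [Group G] [Group H]
    (X Y : Type*)
    [MulAction G X] [MulAction H Y]
    (α : X → Y) (θα : X → G → H)
    (hα2 : ∀ (x : X) (g g' : G), θα x (g * g') = θα (g' • x) g * θα x g')
    (β : Y → X) (θβ : Y → H → G)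
    (ρ : X → G) (lam : Y → H)
    (hρ1 : ∀ x : X, x = ρ x • β (α x))
    (hlam2 : ∀ (y : Y) (h : H), lam (h • y) * θα (β y) (θβ y h) * (lam y)⁻¹ = h)
    (htri1 : ∀ x : X, θα (β (α x)) (ρ x) = lam (α x)) :
    ∀ (h : H) (x : X),
      θα x (θβ (α x) h * (ρ x)⁻¹) = (lam (h • α x))⁻¹ * h ∧
      θα ((θβ (α x) h * (ρ x)⁻¹) • x) (θβ (α x) h * (ρ x)⁻¹)⁻¹
        = h⁻¹ * lam (h • α x) := by
  intro h x
  have hα : IsActionCocycle θα := hα2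
  have hfix : (ρ x)⁻¹ • x = β (α x) := inv_smul_eq_iff.2 (hρ1 x)
  have hmid : θα (β (α x)) (θβ (α x) h) = (lam (h • α x))⁻¹ * h * lam (α x) := by
    refine eq_mul_of_mul_inv_eq (eq_inv_mul_of_mul_eq ?_)
    rw [← mul_assoc, hlam2]
  have key : θα x (θβ (α x) h * (ρ x)⁻¹) = (lam (h • α x))⁻¹ * h := by
    rw [hα2, hfix, hmid, hα.map_inv', hfix, htri1]; group
  exact ⟨key, by rw [hα.map_inv, key]; group⟩

/-- Lemma on adjoint equivalences in 𝕊: if (α,β,ρ,lam) is an adjoint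
equivalence, then for any h ∈ H and x ∈ X, setting g = θ_β(α x)(h)·(ρ x)⁻¹
one has θ_α(x)(g) = (lam (h•α x))⁻¹·h and θ_α(g•x)(g⁻¹) = h⁻¹·lam (h•α x). -/
theorem adjoint_equivalence_theta_lemma
    (G H : Type*) [Group G] [Group H] [Finite G] [Finite H]
    (X Y : Type*) [Finite X] [Finite Y]
    [MulAction G X] [MulAction H Y]
    (α : X → Y) (θα : X → G → H)
    (hα1 : ∀ (x : X) (g : G), α (g • x) = θα x g • α x)
    (hα2 : ∀ (x : X) (g g' : G), θα x (g * g') = θα (g' • x) g * θα x g')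
    (β : Y → X) (θβ : Y → H → G)
    (hβ1 : ∀ (y : Y) (h : H), β (h • y) = θβ y h • β y)
    (hβ2 : ∀ (y : Y) (h h' : H), θβ y (h * h') = θβ (h' • y) h * θβ y h')
    (ρ : X → G) (lam : Y → H)
    (hρ1 : ∀ x : X, x = ρ x • β (α x))
    (hρ2 : ∀ (x : X) (g : G), ρ (g • x) * θβ (α x) (θα x g) * (ρ x)⁻¹ = g)
    (hlam1 : ∀ y : Y, y = lam y • α (β y))
    (hlam2 : ∀ (y : Y) (h : H), lam (h • y) * θα (β y) (θβ y h) * (lam y)⁻¹ = h)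
    (htri1 : ∀ x : X, θα (β (α x)) (ρ x) = lam (α x))
    (htri2 : ∀ y : Y, ρ (β y) = θβ (α (β y)) (lam y)) :
    ∀ (h : H) (x : X),
      θα x (θβ (α x) h * (ρ x)⁻¹) = (lam (h • α x))⁻¹ * h ∧
      θα ((θβ (α x) h * (ρ x)⁻¹) • x) (θβ (α x) h * (ρ x)⁻¹)⁻¹
        = h⁻¹ * lam (h • α x) :=
  adjoint_equivalence_theta_lemma_general G H X Y α θα hα2 β θβ ρ lam hρ1 hlam2 htri1
end

section
/- Let G, H, K be finite groups acting on finite sets X, Y, Z, let (α,θ_α): X/G → Z/K and (β,θ_β): Y/H → Z/K be 1-cells, and let F = {(x,y,k) ∈ X×Y×K | β(y) = k•α(x)} with the G×H-action (g,h)•(x,y,k) = (g•x, h•y, θ_{β,y}(h)·k·θ_{α,x}(g)⁻¹). If (β,θ_β) is stab-surjective, then the 1-cell (℘_X, (g,h) ↦ g): F/(G×H) → X/G given by ℘_X(x,y,k) = x is stab-surjective; explicitly, (i) for every x ∈ X there exist (x',y,k) ∈ F and g ∈ G with x = g•x', and (ii) whenever (x₁,y₁,k₁), (x₂,y₂,k₂)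 ∈ F and g₁, g₂ ∈ G satisfy g₁•x₁ = g₂•x₂, there exists (g,h) ∈ G×H with (g,h)•(x₁,y₁,k₁) = (x₂,y₂,k₂) and g₁ = g₂·g. -/
/-! Over a point `x` the fibre of `F` is nonempty because `β` meets the `K`-orbit of `α x`.
For gluing, `g = g₂⁻¹ g₁` carries `x₁` to `x₂`; the 1-cell law of `α` turns the two fibre
equations into `(k₂ θα(x₁, g) k₁⁻¹) • β y₁ = β y₂`, and stab-surjectivity of `β` produces the
`h ∈ H` relating `y₁` to `y₂` together with the matching `K`-component. -/

section Pullback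

variable {G K X Y Z : Type*} [Group G] [Group K] [MulAction G X] [MulAction K Z]

theorem exists_mem_pullback_of_forall_mem_orbit {α : X → Z} {β : Y → Z}
    (hβ : ∀ z : Z, ∃ (y : Y) (k : K), z = k • β y) (x : X) :
    ∃ (y : Y) (k : K), β y = k • α x := by
  obtain ⟨y, k, hk⟩ := hβ (α x)
  exact ⟨y, k⁻¹, by rw [hk, inv_smul_smul]⟩

theorem pullback_smul_eq_of_smul_eq {α : X → Z} {θα : X → G → K} {β : Y → Z}
    (hα : ∀ (x : X) (g : G), α (g • x) = θα x g • α x)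
    {x₁ x₂ : X} {y₁ y₂ : Y} {k₁ k₂ : K} {g : G}
    (h₁ : β y₁ = k₁ • α x₁) (h₂ : β y₂ = k₂ • α x₂) (hx : g • x₁ = x₂) :
    (k₂ * θα x₁ g * k₁⁻¹) • β y₁ = β y₂ := by
  rw [h₂, ← hx, hα, h₁, mul_smul, mul_smul, inv_smul_smul]

end Pullback

theorem pullback_of_stab_surjective_general
    (G H K : Type*) [Group G] [Group H] [Group K]
    (X Y Z : Type*)
    [MulAction G X] [MulAction H Y] [MulAction K Z]
    (α : X → Z) (θα : X → G → K)
    (hα1 : ∀ (x : X) (g : G), α (g • x) = θα x g • α x)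
    (β : Y → Z) (θβ : Y → H → K)
    (hssβ1 : ∀ z : Z, ∃ (y : Y) (k : K), z = k • β y)
    (hssβ2 : ∀ (y y' : Y) (k k' : K), k • β y = k' • β y' →
      ∃ h : H, y' = h • y ∧ k = k' * θβ y h) :
    -- (i) every x ∈ X is reached from an element of F
    (∀ x : X, ∃ (x' : X) (y : Y) (k : K) (g : G),
      β y = k • α x' ∧ x = g • x') ∧
    -- (ii) gluing condition for elements of F
    (∀ (x₁ x₂ : X) (y₁ y₂ : Y) (k₁ k₂ : K) (g₁ g₂ : G),
      β y₁ = k₁ • α x₁ → β y₂ = k₂ • α x₂ → g₁ • x₁ = g₂ • x₂ →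
      ∃ (g : G) (h : H),
        ((g • x₁, h • y₁, θβ y₁ h * k₁ * (θα x₁ g)⁻¹) : X × Y × K)
          = (x₂, y₂, k₂) ∧ g₁ = g₂ * g) := by
  refine ⟨fun x ↦ ?_, fun x₁ x₂ y₁ y₂ k₁ k₂ g₁ g₂ h₁ h₂ hg ↦ ?_⟩
  · obtain ⟨y, k, hk⟩ := exists_mem_pullback_of_forall_mem_orbit hssβ1 x
    exact ⟨x, y, k, 1, hk, (one_smul G x).symm⟩
  · have hx : (g₂⁻¹ * g₁) • x₁ = x₂ := by rw [mul_smul, hg, inv_smul_smul]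
    have hβy := pullback_smul_eq_of_smul_eq hα1 h₁ h₂ hx
    obtain ⟨h, hy, hk⟩ := hssβ2 y₁ y₂ (k₂ * θα x₁ (g₂⁻¹ * g₁) * k₁⁻¹) 1
      (by rwa [one_smul])
    rw [one_mul] at hk
    have hk₂ : θβ y₁ h * k₁ * (θα x₁ (g₂⁻¹ * g₁))⁻¹ = k₂ := by rw [← hk]; group
    exact ⟨g₂⁻¹ * g₁, h, by rw [hx, ← hy, hk₂], by group⟩

/-- Stab-surjective 1-cells are stable under 2-pullbacks: if (β,θβ) is
stab-surjective, then the projection ℘_X from the 2-fibered product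
F = {(x,y,k) | β(y) = k•α(x)} (with its G×H-action) to X/G is
stab-surjective. -/
theorem pullback_of_stab_surjective
    (G H K : Type*) [Group G] [Group H] [Group K] [Finite G] [Finite H] [Finite K]
    (X Y Z : Type*) [Finite X] [Finite Y] [Finite Z]
    [MulAction G X] [MulAction H Y] [MulAction K Z]
    (α : X → Z) (θα : X → G → K)
    (hα1 : ∀ (x : X) (g : G), α (g • x) = θα x g • α x)
    (hα2 : ∀ (x : X) (g g' : G), θα x (g * g') = θα (g' • x) g * θα x g')
    (β : Y → Z) (θβ : Y → H → K)
    (hβ1 : ∀ (y : Y) (h : H), β (h • y) = θβ y h • β y)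
    (hβ2 : ∀ (y : Y) (h h' : H), θβ y (h * h') = θβ (h' • y) h * θβ y h')
    (hssβ1 : ∀ z : Z, ∃ (y : Y) (k : K), z = k • β y)
    (hssβ2 : ∀ (y y' : Y) (k k' : K), k • β y = k' • β y' →
      ∃ h : H, y' = h • y ∧ k = k' * θβ y h) :
    -- (i) every x ∈ X is reached from an element of F
    (∀ x : X, ∃ (x' : X) (y : Y) (k : K) (g : G),
      β y = k • α x' ∧ x = g • x') ∧
    -- (ii) gluing condition for elements of F
    (∀ (x₁ x₂ : X) (y₁ y₂ : Y) (k₁ k₂ : K) (g₁ g₂ : G),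
      β y₁ = k₁ • α x₁ → β y₂ = k₂ • α x₂ → g₁ • x₁ = g₂ • x₂ →
      ∃ (g : G) (h : H),
        ((g • x₁, h • y₁, θβ y₁ h * k₁ * (θα x₁ g)⁻¹) : X × Y × K)
          = (x₂, y₂, k₂) ∧ g₁ = g₂ * g) :=
  pullback_of_stab_surjective_general G H K X Y Z α θα hα1 β θβ hssβ1 hssβ2
end

section
/- Let (α,θ): X/G → Y/H be a stab-surjective 1-cell between finite group actions. Then the assignment sending the G-orbit of a point x ∈ X to the H-orbit of α(x) ∈ Y is a well-defined bijection from the set of G-orbits of X onto the set of H-orbits of Y. In particular, X and Y have the same number of orbits, and for each x ∈ X the set H•α(G•x) = {h•α(x') | h ∈ H, x' ∈ G•x} is a single H-orbit. -/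
namespace MulAction

variable {G H X Y : Type*} [Group G] [Group H] [MulAction G X] [MulAction H Y]
  {α : X → Y} {θ : X → G → H}

theorem map_mem_orbit_of_mem_orbit (hα : ∀ (x : X) (g : G), α (g • x) = θ x g • α x)
    {x x' : X} (hx : x' ∈ orbit G x) : α x' ∈ orbit H (α x) := by
  obtain ⟨g, rfl⟩ := hx
  exact ⟨θ x g, (hα x g).symm⟩

def orbitQuotientMap (hα : ∀ (x : X) (g : G), α (g • x) = θ x g • α x) :
    orbitRel.Quotient G X → orbitRel.Quotient H Y :=
  Quotient.map α fun _ _ hx => map_mem_orbit_of_mem_orbit hα hx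

@[simp]
theorem orbitQuotientMap_mk (hα : ∀ (x : X) (g : G), α (g • x) = θ x g • α x) (x : X) :
    orbitQuotientMap hα (Quotient.mk _ x) = Quotient.mk _ (α x) :=
  rfl

theorem orbitQuotientMap_injective (hα : ∀ (x : X) (g : G), α (g • x) = θ x g • α x)
    (hss2 : ∀ (x x' : X) (h h' : H), h • α x = h' • α x' →
      ∃ g : G, x' = g • x ∧ h = h' * θ x g) :
    Function.Injective (orbitQuotientMap hα) := by
  rintro ⟨x⟩ ⟨x'⟩ hxx'
  obtain ⟨h, hh⟩ := Quotient.exact hxx'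
  obtain ⟨g, hg, -⟩ := hss2 x' x h 1 (by rwa [one_smul])
  exact Quotient.sound ⟨g, hg.symm⟩

theorem orbitQuotientMap_surjective (hα : ∀ (x : X) (g : G), α (g • x) = θ x g • α x)
    (hss1 : ∀ y : Y, ∃ (x : X) (h : H), y = h • α x) :
    Function.Surjective (orbitQuotientMap hα) := by
  rintro ⟨y⟩
  obtain ⟨x, h, rfl⟩ := hss1 y
  exact ⟨Quotient.mk _ x, Quotient.sound (mem_orbit_smul h (α x))⟩

theorem setOf_smul_map_orbit_eq_orbit (hα : ∀ (x : X) (g : G), α (g • x) = θ x g • α x)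
    (x : X) :
    {y : Y | ∃ (h : H) (x' : X), x' ∈ orbit G x ∧ y = h • α x'} = orbit H (α x) := by
  ext y
  constructor
  · rintro ⟨h, x', hx', rfl⟩
    exact mem_orbit_of_mem_orbit h (map_mem_orbit_of_mem_orbit hα hx')
  · rintro ⟨h, rfl⟩
    exact ⟨h, x, mem_orbit_self x, rfl⟩

end MulAction

theorem stab_surjective_orbit_bijection_general
    (G H : Type*) [Group G] [Group H]
    (X Y : Type*)
    [MulAction G X] [MulAction H Y]
    (α : X → Y) (θ : X → G → H)
    (hα1 : ∀ (x : X) (g : G), α (g • x) = θ x g • α x)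
    (hss1 : ∀ y : Y, ∃ (x : X) (h : H), y = h • α x)
    (hss2 : ∀ (x x' : X) (h h' : H), h • α x = h' • α x' →
      ∃ g : G, x' = g • x ∧ h = h' * θ x g) :
    (∃ f : Quotient (MulAction.orbitRel G X) → Quotient (MulAction.orbitRel H Y),
      Function.Bijective f ∧
      ∀ x : X, f (Quotient.mk (MulAction.orbitRel G X) x)
        = Quotient.mk (MulAction.orbitRel H Y) (α x)) ∧
    Nat.card (Quotient (MulAction.orbitRel G X))
      = Nat.card (Quotient (MulAction.orbitRel H Y)) ∧
    (∀ x : X,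
      {y : Y | ∃ (h : H) (x' : X), x' ∈ MulAction.orbit G x ∧ y = h • α x'}
        = MulAction.orbit H (α x)) := by
  have hbij : Function.Bijective (MulAction.orbitQuotientMap hα1) :=
    ⟨MulAction.orbitQuotientMap_injective hα1 hss2, MulAction.orbitQuotientMap_surjective hα1 hss1⟩
  exact ⟨⟨MulAction.orbitQuotientMap hα1, hbij, MulAction.orbitQuotientMap_mk hα1⟩,
    Nat.card_eq_of_bijective _ hbij, MulAction.setOf_smul_map_orbit_eq_orbit hα1⟩

/-- A stab-surjective 1-cell (α,θ) : X/G → Y/H induces a bijection between the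
set of G-orbits of X and the set of H-orbits of Y, sending the orbit of x to
the orbit of α(x); in particular X and Y have the same number of orbits, and
H•α(G•x) is a single H-orbit for every x ∈ X. -/
theorem stab_surjective_orbit_bijection
    (G H : Type*) [Group G] [Group H] [Finite G] [Finite H]
    (X Y : Type*) [Finite X] [Finite Y]
    [MulAction G X] [MulAction H Y]
    (α : X → Y) (θ : X → G → H)
    (hα1 : ∀ (x : X) (g : G), α (g • x) = θ x g • α x)
    (hα2 : ∀ (x : X) (g g' : G), θ x (g * g') = θ (g' • x) g * θ x g')
    (hss1 : ∀ y : Y, ∃ (x : X) (h : H), y = h • α x)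
    (hss2 : ∀ (x x' : X) (h h' : H), h • α x = h' • α x' →
      ∃ g : G, x' = g • x ∧ h = h' * θ x g) :
    (∃ f : Quotient (MulAction.orbitRel G X) → Quotient (MulAction.orbitRel H Y),
      Function.Bijective f ∧
      ∀ x : X, f (Quotient.mk (MulAction.orbitRel G X) x)
        = Quotient.mk (MulAction.orbitRel H Y) (α x)) ∧
    Nat.card (Quotient (MulAction.orbitRel G X))
      = Nat.card (Quotient (MulAction.orbitRel H Y)) ∧
    (∀ x : X,
      {y : Y | ∃ (h : H) (x' : X), x' ∈ MulAction.orbit G x ∧ y = h • α x'}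
        = MulAction.orbit H (α x)) :=
  stab_surjective_orbit_bijection_general G H X Y α θ hα1 hss1 hss2
end

section
/- Let G be a finite group acting on finite sets X and Y, and let α: X → Y be a G-equivariant map (α(g•x) = g•α(x) for all g, x). Then the 1-cell (α, θ) with the constant family θ_x = id_G is stab-surjective if and only if α is bijective; explicitly, the two conditions '(i) for every y ∈ Y there exist x ∈ X and g ∈ G with y = g•α(x), and (ii) whenever g•α(x) = g'•α(x') there exists g'' ∈ G with x' = g''•x and g = g'·g''' hold if and only if α is a bijection. -/
namespace MulAction

variable {G X Y : Type*} [Group G] [MulAction G X] [MulAction G Y] {α : X → Y}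

theorem surjective_iff_forall_eq_smul_of_equivariant
    (hequiv : ∀ (g : G) (x : X), α (g • x) = g • α x) :
    Function.Surjective α ↔ ∀ y : Y, ∃ (x : X) (g : G), y = g • α x := by
  constructor
  · intro hsurj y
    obtain ⟨x, rfl⟩ := hsurj y
    exact ⟨x, 1, (one_smul G _).symm⟩
  · intro h y
    obtain ⟨x, g, rfl⟩ := h y
    exact ⟨g • x, hequiv g x⟩

theorem injective_iff_forall_smul_eq_smul_of_equivariant
    (hequiv : ∀ (g : G) (x : X), α (g • x) = g • α x) :
    Function.Injective α ↔ ∀ (x x' : X) (g g' : G), g • α x = g' • α x' →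
      ∃ g'' : G, x' = g'' • x ∧ g = g' * g'' := by
  constructor
  · intro hinj x x' g g' h
    refine ⟨g'⁻¹ * g, hinj ?_, by group⟩
    rw [hequiv, mul_smul, h, inv_smul_smul]
  · intro h x x' hx
    obtain ⟨g'', hx', hg''⟩ := h x x' (1 : G) 1 (by rw [hx])
    rw [one_mul, eq_comm] at hg''
    rw [hx', hg'', one_smul]

end MulAction

theorem equivariant_stab_surjective_iff_bijective_general
    (G : Type*) [Group G]
    (X Y : Type*)
    [MulAction G X] [MulAction G Y]
    (α : X → Y)
    (hequiv : ∀ (g : G) (x : X), α (g • x) = g • α x) :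
    ((∀ y : Y, ∃ (x : X) (g : G), y = g • α x) ∧
     (∀ (x x' : X) (g g' : G), g • α x = g' • α x' →
       ∃ g'' : G, x' = g'' • x ∧ g = g' * g''))
    ↔ Function.Bijective α := by
  rw [Function.Bijective, and_comm,
    MulAction.injective_iff_forall_smul_eq_smul_of_equivariant hequiv,
    MulAction.surjective_iff_forall_eq_smul_of_equivariant hequiv]

/-- For a G-equivariant map α : X → Y between finite G-sets, the corresponding
equivariant 1-cell (with constant acting family θ_x = id_G) is stab-surjective
if and only if α is a bijection. -/
theorem equivariant_stab_surjective_iff_bijective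
    (G : Type*) [Group G] [Finite G]
    (X Y : Type*) [Finite X] [Finite Y]
    [MulAction G X] [MulAction G Y]
    (α : X → Y)
    (hequiv : ∀ (g : G) (x : X), α (g • x) = g • α x) :
    ((∀ y : Y, ∃ (x : X) (g : G), y = g • α x) ∧
     (∀ (x x' : X) (g g' : G), g • α x = g' • α x' →
       ∃ g'' : G, x' = g'' • x ∧ g = g' * g''))
    ↔ Function.Bijective α :=
  equivariant_stab_surjective_iff_bijective_general G X Y α hequiv
end

section
/- Let (α,θ_α): X/G → Y/H be a stab-surjective 1-cell, let (β,θ_β): X/G → Y'/H be any 1-cell to a finite H-set Y', and let ε: X → H be a map satisfying ε_{g•x}·θ_{α,x}(g)·ε_x⁻¹ = θ_{β,x}(g) for all x ∈ X and g ∈ G. Then there exists a unique H-equivariant map ω: Y → Y' such that ω(α(x)) = ε_x⁻¹•β(x) for all x ∈ X. -/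
/-!
Twisting `β` by `ε` gives `γ x := (ε x)⁻¹ • β x`, which satisfies `γ (g • x) = θα x g • γ x`.
Every `y : Y` has the form `h • α x`, and `ω y := h • γ x` is forced; the second stab-surjectivity
condition says any two presentations of `y` differ by some `g : G` acting through `θα`, and that
relation is exactly what `γ` respects, so `ω` is well defined. It is then `H`-equivariant by
construction.
-/

structure IsStabSurjective {G H X Y : Type*} [Group G] [Group H] [MulAction G X] [MulAction H Y]
    (α : X → Y) (θ : X → G → H) : Prop where
  exists_smul_eq : ∀ y : Y, ∃ (x : X) (h : H), y = h • α x
  exists_of_smul_eq_smul : ∀ (x x' : X) (h h' : H), h • α x = h' • α x' →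
    ∃ g : G, x' = g • x ∧ h = h' * θ x g

namespace IsStabSurjective

variable {G H X Y Y' : Type*} [Group G] [Group H] [MulAction G X] [MulAction H Y]
  [MulAction H Y'] {α : X → Y} {θ : X → G → H} {γ : X → Y'}

theorem smul_eq_smul (hα : IsStabSurjective α θ) (hγ : ∀ (x : X) (g : G), γ (g • x) = θ x g • γ x)
    {x x' : X} {h h' : H} (heq : h • α x = h' • α x') : h • γ x = h' • γ x' := by
  obtain ⟨g, rfl, rfl⟩ := hα.exists_of_smul_eq_smul x x' h h' heq
  rw [hγ, mul_smul]

theorem existsUnique_equivariant_comp_eq (hα : IsStabSurjective α θ)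
    (hγ : ∀ (x : X) (g : G), γ (g • x) = θ x g • γ x) :
    ∃! ω : Y → Y', (∀ (h : H) (y : Y), ω (h • y) = h • ω y) ∧ ∀ x : X, ω (α x) = γ x := by
  choose xOf hOf hxOf using hα.exists_smul_eq
  refine ⟨fun y => hOf y • γ (xOf y), ⟨fun h y => ?_, fun x => ?_⟩, ?_⟩
  · rw [← mul_smul]
    refine hα.smul_eq_smul hγ ?_
    rw [mul_smul, ← hxOf, ← hxOf]
  · rw [← one_smul H (γ x)]
    refine hα.smul_eq_smul hγ ?_
    rw [← hxOf, one_smul]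
  · rintro ω ⟨hω, hωα⟩
    funext y
    conv_lhs => rw [hxOf y, hω, hωα]

end IsStabSurjective

theorem inv_smul_smul_eq_of_twist {G H X Y' : Type*} [Group G] [Group H] [MulAction G X]
    [MulAction H Y'] {β : X → Y'} {θα θβ : X → G → H} {ε : X → H}
    (hβ : ∀ (x : X) (g : G), β (g • x) = θβ x g • β x)
    (hε : ∀ (x : X) (g : G), ε (g • x) * θα x g * (ε x)⁻¹ = θβ x g) (x : X) (g : G) :
    (ε (g • x))⁻¹ • β (g • x) = θα x g • (ε x)⁻¹ • β x := by
  rw [hβ, ← hε, smul_smul, smul_smul, mul_assoc, inv_mul_cancel_left]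

theorem factorization_through_stab_surjective_general
    (G H : Type*) [Group G] [Group H]
    (X Y Y' : Type*)
    [MulAction G X] [MulAction H Y] [MulAction H Y']
    (α : X → Y) (θα : X → G → H)
    (β : X → Y') (θβ : X → G → H)
    (hβ1 : ∀ (x : X) (g : G), β (g • x) = θβ x g • β x)
    (hssα1 : ∀ y : Y, ∃ (x : X) (h : H), y = h • α x)
    (hssα2 : ∀ (x x' : X) (h h' : H), h • α x = h' • α x' →
      ∃ g : G, x' = g • x ∧ h = h' * θα x g)
    (ε : X → H)
    (hε : ∀ (x : X) (g : G), ε (g • x) * θα x g * (ε x)⁻¹ = θβ x g) :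
    ∃! ω : Y → Y',
      (∀ (h : H) (y : Y), ω (h • y) = h • ω y) ∧
      (∀ x : X, ω (α x) = (ε x)⁻¹ • β x) :=
  IsStabSurjective.existsUnique_equivariant_comp_eq ⟨hssα1, hssα2⟩
    (inv_smul_smul_eq_of_twist hβ1 hε)

/-- Factorization through a stab-surjective 1-cell: given a stab-surjective
1-cell (α,θα) : X/G → Y/H, any 1-cell (β,θβ) : X/G → Y'/H, and a 2-cell datum
ε identifying the acting parts, there is a unique H-equivariant map ω : Y → Y'
with ω(α(x)) = ε(x)⁻¹ • β(x) for all x. -/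
theorem factorization_through_stab_surjective
    (G H : Type*) [Group G] [Group H] [Finite G] [Finite H]
    (X Y Y' : Type*) [Finite X] [Finite Y] [Finite Y']
    [MulAction G X] [MulAction H Y] [MulAction H Y']
    (α : X → Y) (θα : X → G → H)
    (hα1 : ∀ (x : X) (g : G), α (g • x) = θα x g • α x)
    (hα2 : ∀ (x : X) (g g' : G), θα x (g * g') = θα (g' • x) g * θα x g')
    (β : X → Y') (θβ : X → G → H)
    (hβ1 : ∀ (x : X) (g : G), β (g • x) = θβ x g • β x)
    (hβ2 : ∀ (x : X) (g g' : G), θβ x (g * g') = θβ (g' • x) g * θβ x g')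
    (hssα1 : ∀ y : Y, ∃ (x : X) (h : H), y = h • α x)
    (hssα2 : ∀ (x x' : X) (h h' : H), h • α x = h' • α x' →
      ∃ g : G, x' = g • x ∧ h = h' * θα x g)
    (ε : X → H)
    (hε : ∀ (x : X) (g : G), ε (g • x) * θα x g * (ε x)⁻¹ = θβ x g) :
    ∃! ω : Y → Y',
      (∀ (h : H) (y : Y), ω (h • y) = h • ω y) ∧
      (∀ x : X, ω (α x) = (ε x)⁻¹ • β x) :=
  factorization_through_stab_surjective_general G H X Y Y' α θα β θβ hβ1 hssα1 hssα2 ε hε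
end
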